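/- arXiv:2407.17134 — 2 statements merged into one kernel-verified Lean document; each statement's English description precedes it below -/
import Mathlib

section
/- Let V be a near-vector space over a scalar group F, u a nonzero element of the quasi-kernel, and λ a nonzero element of F. The map θ(v) = λv together with η(α) = λαλ⁻¹ gives an isomorphism of near-vector spaces from the 𝔡_u-vector space Q_u(V) onto the 𝔡_{λu}-vector space Q_{λu}(V). -/
/-- A scalar group `(F, ·, 1, 0, -1)`: a monoid with an absorbing zero such that
`(F \ {0}, ·)` is a group and `{±1}` is the solution set of `x² = 1`. -/
class ScalarGroup (F : Type*) extends Monoid F, Zero F, Inv F where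
  negOne : F
  zero_mul : ∀ a : F, 0 * a = 0
  mul_zero : ∀ a : F, a * 0 = 0
  one_ne_zero : (1 : F) ≠ 0
  sq_iff : ∀ x : F, x * x = 1 ↔ x = 1 ∨ x = negOne
  mul_inv_cancel : ∀ a : F, a ≠ 0 → a * a⁻¹ = 1
  inv_mul_cancel : ∀ a : F, a ≠ 0 → a⁻¹ * a = 1

/-- A (left) near-vector space over a scalar group `F`: an additive abelian
group `V` with a free action of `F` by additive endomorphisms, such that the
quasi-kernel generates `V` as an additive group. -/
class NearVectorSpace (F V : Type*) [ScalarGroup F] [AddCommGroup V] extends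
    SMul F V where
  one_smul : ∀ v : V, (1 : F) • v = v
  mul_smul : ∀ (a b : F) (v : V), (a * b) • v = a • (b • v)
  smul_add : ∀ (a : F) (v w : V), a • (v + w) = a • v + a • w
  zero_smul : ∀ v : V, (0 : F) • v = 0
  free : ∀ (a b : F) (v : V), v ≠ 0 → a • v = b • v → a = b
  gen : AddSubgroup.closure {v : V | ∀ α β : F, ∃ γ : F, α • v + β • v = γ • v} = ⊤

/-- The quasi-kernel `Q(V)` of a near-vector space. -/
def quasiKernel (F V : Type*) [ScalarGroup F] [AddCommGroup V] [NearVectorSpace F V] :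
    Set V :=
  {v : V | ∀ α β : F, ∃ γ : F, α • v + β • v = γ • v}

/-- The distributive elements `𝔡_u` of the near-field `F_u = (F, +_u, ·)`, where
`p = +_u` is the addition induced by a nonzero quasi-kernel element `u`. -/
def dstrU {F : Type*} [ScalarGroup F] (p : F → F → F) : Set F :=
  {γ : F | ∀ α β : F, p α β * γ = p (α * γ) (β * γ)}

/-- `Q_u(V)`: the set of quasi-kernel elements whose induced addition is `p = +_u`
(together with `0`, which satisfies the condition trivially). -/
def QU (F V : Type*) [ScalarGroup F] [AddCommGroup V] [NearVectorSpace F V]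
    (p : F → F → F) : Set V :=
  {v : V | v ∈ quasiKernel F V ∧ ∀ α β : F, α • v + β • v = p α β • v}

/-- Iterated sum with respect to the addition `p = +_u` (whose neutral element is `0`). -/
def usum {F : Type*} [ScalarGroup F] (p : F → F → F) : List F → F
  | [] => 0
  | a :: l => p a (usum p l)

/-
The addition induced by `λu` is the addition induced by `u` twisted by `λ`:
`α +_{λu} β = ((αλ) +_u (βλ)) λ⁻¹`, because `α(λu) + β(λu) = (αλ)u + (βλ)u`. Twisting by `λ⁻¹`
undoes twisting by `λ`, so `v ↦ λv` maps `Q_u(V)` onto `Q_{λu}(V)` with inverse `v ↦ λ⁻¹v`, and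
conjugation by `λ` maps the distributive elements of `F_u` onto those of `F_{λu}`.
-/

namespace ScalarGroup

variable {F : Type*} [ScalarGroup F]

-- The inverse of this unit is `a⁻¹` definitionally, so `↑μ⁻¹` matches `lam⁻¹` in the theorem.
def unitOfNeZero (a : F) (ha : a ≠ 0) : Fˣ :=
  ⟨a, a⁻¹, mul_inv_cancel a ha, inv_mul_cancel a ha⟩

def twistAdd (μ : Fˣ) (p : F → F → F) : F → F → F :=
  fun α β => p (α * μ) (β * μ) * ↑μ⁻¹

@[simp]
theorem twistAdd_inv_twistAdd (μ : Fˣ) (p : F → F → F) :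
    twistAdd μ⁻¹ (twistAdd μ p) = p := by
  funext α β
  simp [twistAdd, mul_assoc]

theorem conj_mul_conj (μ : Fˣ) (d e : F) :
    ↑μ * (d * e) * ↑μ⁻¹ = (↑μ * d * ↑μ⁻¹) * (↑μ * e * ↑μ⁻¹) := by
  simp [mul_assoc]

theorem conj_mem_dstrU_twistAdd (μ : Fˣ) {p : F → F → F} {d : F} (hd : d ∈ dstrU p) :
    ↑μ * d * ↑μ⁻¹ ∈ dstrU (twistAdd μ p) := by
  intro α β
  calc twistAdd μ p α β * (↑μ * d * ↑μ⁻¹) = p (α * μ) (β * μ) * d * ↑μ⁻¹ := by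
        simp [twistAdd, mul_assoc]
    _ = p (α * μ * d) (β * μ * d) * ↑μ⁻¹ := by rw [hd]
    _ = twistAdd μ p (α * (↑μ * d * ↑μ⁻¹)) (β * (↑μ * d * ↑μ⁻¹)) := by
        simp [twistAdd, mul_assoc]

theorem bijOn_conj_dstrU (μ : Fˣ) (p : F → F → F) :
    Set.BijOn (fun d : F => ↑μ * d * ↑μ⁻¹) (dstrU p) (dstrU (twistAdd μ p)) := by
  refine Set.InvOn.bijOn (f' := fun e : F => ↑μ⁻¹ * e * ↑μ) ⟨?_, ?_⟩
    (fun d hd => conj_mem_dstrU_twistAdd μ hd) (fun e he => ?_)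
  · intro d _
    simp [mul_assoc]
  · intro e _
    simp [mul_assoc]
  · simpa using conj_mem_dstrU_twistAdd μ⁻¹ he

end ScalarGroup

namespace NearVectorSpace

open ScalarGroup

variable {F V : Type*} [ScalarGroup F] [AddCommGroup V] [NearVectorSpace F V]

protected theorem smul_zero (a : F) : a • (0 : V) = 0 := by
  have h := NearVectorSpace.smul_add a (0 : V) 0
  rwa [add_zero, left_eq_add] at h

@[simp]
theorem inv_smul_smul (μ : Fˣ) (v : V) : (↑μ⁻¹ : F) • (μ : F) • v = v := by
  rw [← NearVectorSpace.mul_smul, Units.inv_mul, NearVectorSpace.one_smul]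

@[simp]
theorem smul_inv_smul (μ : Fˣ) (v : V) : (μ : F) • (↑μ⁻¹ : F) • v = v := by
  simpa using inv_smul_smul μ⁻¹ v

theorem unit_smul_ne_zero (μ : Fˣ) {v : V} (hv : v ≠ 0) : (μ : F) • v ≠ 0 := by
  intro h
  apply hv
  rw [← inv_smul_smul μ v, h, NearVectorSpace.smul_zero]

theorem conj_smul_smul (μ : Fˣ) (d : F) (v : V) :
    (↑μ * d * ↑μ⁻¹) • (μ : F) • v = (μ : F) • d • v := by
  rw [← NearVectorSpace.mul_smul, Units.inv_mul_cancel_right, NearVectorSpace.mul_smul]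

/-- `IsInducedAdd v p` says that `p` is the addition `+_v` induced by `v`. -/
def IsInducedAdd (v : V) (p : F → F → F) : Prop :=
  ∀ α β : F, α • v + β • v = p α β • v

theorem IsInducedAdd.unique {v : V} {p q : F → F → F} (hv : v ≠ 0)
    (hp : IsInducedAdd v p) (hq : IsInducedAdd v q) : p = q := by
  funext α β
  exact NearVectorSpace.free _ _ v hv (by rw [← hp, hq])

theorem IsInducedAdd.smul {v : V} {p : F → F → F} (h : IsInducedAdd v p) (μ : Fˣ) :
    IsInducedAdd ((μ : F) • v) (twistAdd μ p) := by
  intro α β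
  simp only [← NearVectorSpace.mul_smul, twistAdd, mul_assoc, Units.inv_mul, mul_one]
  exact h _ _

theorem mem_QU_of_isInducedAdd {v : V} {p : F → F → F} (h : IsInducedAdd v p) :
    v ∈ QU F V p :=
  ⟨fun α β => ⟨p α β, h α β⟩, h⟩

theorem bijOn_smul_QU (μ : Fˣ) (p : F → F → F) :
    Set.BijOn (fun v : V => (μ : F) • v) (QU F V p) (QU F V (twistAdd μ p)) := by
  refine Set.InvOn.bijOn (f' := fun w => (↑μ⁻¹ : F) • w) ⟨?_, ?_⟩
    (fun v hv => mem_QU_of_isInducedAdd (IsInducedAdd.smul hv.2 μ)) (fun w hw => ?_)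
  · intro v _
    simp
  · intro w _
    simp
  · simpa using mem_QU_of_isInducedAdd (IsInducedAdd.smul hw.2 μ⁻¹)

end NearVectorSpace

theorem stmt10_general (F V : Type*) [ScalarGroup F] [AddCommGroup V] [NearVectorSpace F V]
    (u : V) (hu0 : u ≠ 0)
    (lam : F) (hlam : lam ≠ 0)
    (p q : F → F → F)
    (hp : ∀ α β : F, α • u + β • u = p α β • u)
    (hq : ∀ α β : F, α • (lam • u) + β • (lam • u) = q α β • (lam • u)) :
    Set.BijOn (fun v : V => lam • v) (QU F V p) (QU F V q) ∧
    (∀ v w : V, lam • (v + w) = lam • v + lam • w) ∧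
    Set.BijOn (fun d => lam * d * lam⁻¹) (dstrU p) (dstrU q) ∧
    (∀ d e : F, lam * (d * e) * lam⁻¹ = (lam * d * lam⁻¹) * (lam * e * lam⁻¹)) ∧
    (∀ d ∈ dstrU p, ∀ v ∈ QU F V p, lam • (d • v) = (lam * d * lam⁻¹) • (lam • v)) := by
  let μ := ScalarGroup.unitOfNeZero lam hlam
  have hq_twist : q = ScalarGroup.twistAdd μ p :=
    NearVectorSpace.IsInducedAdd.unique (NearVectorSpace.unit_smul_ne_zero μ hu0) hq
      (NearVectorSpace.IsInducedAdd.smul hp μ)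
  subst hq_twist
  exact ⟨NearVectorSpace.bijOn_smul_QU μ p, NearVectorSpace.smul_add lam,
    ScalarGroup.bijOn_conj_dstrU μ p, ScalarGroup.conj_mul_conj μ,
    fun d _ v _ => (NearVectorSpace.conj_smul_smul μ d v).symm⟩

/-- The map `θ(v) = λv` together with `η(α) = λαλ⁻¹` is an isomorphism of
near-vector spaces from the `𝔡_u`-vector space `Q_u(V)` onto the
`𝔡_{λu}`-vector space `Q_{λu}(V)`: `θ` is an additive bijection of `Q_u(V)`
onto `Q_{λu}(V)`, `η` is a multiplicative bijection of `𝔡_u` onto `𝔡_{λu}`,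
and `θ(d • v) = η(d) • θ(v)`. -/
theorem stmt10 (F V : Type*) [ScalarGroup F] [AddCommGroup V] [NearVectorSpace F V]
    (u : V) (hu : u ∈ quasiKernel F V) (hu0 : u ≠ 0)
    (lam : F) (hlam : lam ≠ 0)
    (p q : F → F → F)
    (hp : ∀ α β : F, α • u + β • u = p α β • u)
    (hq : ∀ α β : F, α • (lam • u) + β • (lam • u) = q α β • (lam • u)) :
    Set.BijOn (fun v : V => lam • v) (QU F V p) (QU F V q) ∧
    (∀ v w : V, lam • (v + w) = lam • v + lam • w) ∧
    Set.BijOn (fun d => lam * d * lam⁻¹) (dstrU p) (dstrU q) ∧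
    (∀ d e : F, lam * (d * e) * lam⁻¹ = (lam * d * lam⁻¹) * (lam * e * lam⁻¹)) ∧
    (∀ d ∈ dstrU p, ∀ v ∈ QU F V p, lam • (d • v) = (lam * d * lam⁻¹) • (lam • v)) :=
  stmt10_general F V u hu0 lam hlam p q hp hq
end

section
/- Let V be a regular near-vector space over a scalar group F and u a nonzero element of the quasi-kernel. Then the dimension of V as a near-vector space over F (the cardinality of any scalar basis) equals the dimension of Q_u(V) as a vector space over the division ring 𝔡_u of distributive elements of F_u. -/
/-!
Every vector `b` of a scalar basis `B` lies in the quasi-kernel and so carries its own addition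
`+_b` on `F`. Regularity makes `b` compatible with `u`: for some `λ ≠ 0` the vector `u + λ b` lies
in `Q(V)`, and unless `u ∈ F b`, comparing the `u`- and `b`-components of
`α (u + λ b) + β (u + λ b) = γ (u + λ b)` shows that `λ b` induces the addition `+_u`. So each
basis vector can be rescaled into `Q_u(V)`. The rescaled family is a `𝔡_u`-basis of `Q_u(V)`:
the coordinates of an element of `Q_u(V)` are distributive because coordinates with respect to
`B` are unique, which in turn rests on `-1 ∈ F` acting as negation on `V`, a fact read off from
the basis. Invariance of dimension over the division ring `𝔡_u` concludes.
-/

open ScalarGroup (negOne)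

namespace ScalarGroup

variable {F : Type*} [ScalarGroup F]

theorem mul_mul_inv_cancel_right {c : F} (hc : c ≠ 0) (a : F) : a * c * c⁻¹ = a := by
  rw [mul_assoc, ScalarGroup.mul_inv_cancel c hc, mul_one]

theorem mul_inv_mul_cancel_right {c : F} (hc : c ≠ 0) (a : F) : a * c⁻¹ * c = a := by
  rw [mul_assoc, ScalarGroup.inv_mul_cancel c hc, mul_one]

theorem mul_right_cancel {a b c : F} (hc : c ≠ 0) (h : a * c = b * c) : a = b := by
  rw [← mul_mul_inv_cancel_right hc a, h, mul_mul_inv_cancel_right hc]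

theorem eq_zero_of_mul_eq_zero {a c : F} (hc : c ≠ 0) (h : a * c = 0) : a = 0 :=
  ScalarGroup.mul_right_cancel hc (h.trans (ScalarGroup.zero_mul c).symm)

end ScalarGroup

instance NearVectorSpace.toDistribMulAction {F V : Type*} [ScalarGroup F] [AddCommGroup V]
    [NearVectorSpace F V] : DistribMulAction F V where
  smul a v := a • v
  one_smul := NearVectorSpace.one_smul
  mul_smul := NearVectorSpace.mul_smul
  smul_add := NearVectorSpace.smul_add
  smul_zero a := by simpa using NearVectorSpace.smul_add a (0 : V) 0

section QuasiKernel

variable {F V : Type*} [ScalarGroup F] [AddCommGroup V] [NearVectorSpace F V]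

theorem zero_mem_quasiKernel : (0 : V) ∈ quasiKernel F V :=
  fun _ _ => ⟨0, by simp⟩

theorem smul_mem_quasiKernel {q : V} (hq : q ∈ quasiKernel F V) (γ : F) :
    γ • q ∈ quasiKernel F V := by
  rcases eq_or_ne γ 0 with rfl | hγ
  · rw [NearVectorSpace.zero_smul]; exact zero_mem_quasiKernel
  · intro α β
    obtain ⟨δ, hδ⟩ := hq (α * γ) (β * γ)
    refine ⟨δ * γ⁻¹, ?_⟩
    rw [← mul_smul, ← mul_smul, hδ, ← mul_smul, ScalarGroup.mul_inv_mul_cancel_right hγ]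

theorem eq_one_or_eq_negOne_of_smul_eq_neg {ε : F} {v : V} (hv : v ≠ 0) (h : ε • v = -v) :
    ε = 1 ∨ ε = negOne := by
  refine (ScalarGroup.sq_iff ε).1 (NearVectorSpace.free _ _ v hv ?_)
  rw [mul_smul, h, smul_neg, h, neg_neg, one_smul]

theorem negOne_smul_of_mem_quasiKernel (h1 : (negOne : F) ≠ 1) {q : V}
    (hq : q ∈ quasiKernel F V) : (negOne : F) • q = -q := by
  rcases eq_or_ne q 0 with rfl | hq0
  · rw [smul_zero, neg_zero]
  obtain ⟨δ, hδ⟩ := hq 1 negOne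
  rw [one_smul] at hδ
  -- applying `negOne` swaps the two summands of `q + negOne • q`
  have hδ' : (negOne * δ) • q = (1 * δ) • q := by
    rw [mul_smul, ← hδ, smul_add, ← mul_smul, (ScalarGroup.sq_iff _).2 (Or.inr rfl), one_smul,
      one_mul, add_comm, hδ]
  have hδ0 : δ = 0 := by
    by_contra hδ0
    exact h1 (ScalarGroup.mul_right_cancel hδ0 (NearVectorSpace.free _ _ q hq0 hδ'))
  rw [hδ0, NearVectorSpace.zero_smul] at hδ
  exact eq_neg_of_add_eq_zero_right hδ

end QuasiKernel

structure IsScalarBasis (F : Type*) {V : Type*} [ScalarGroup F] [AddCommGroup V]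
    [NearVectorSpace F V] (B : Set V) : Prop where
  subset_quasiKernel : B ⊆ quasiKernel F V
  zero_notMem : (0 : V) ∉ B
  exists_eq_sum : ∀ v : V, ∃ (s : Finset V) (c : V → F), ↑s ⊆ B ∧ v = ∑ b ∈ s, c b • b
  eq_zero_of_sum_eq_zero : ∀ (s : Finset V) (c : V → F), ↑s ⊆ B →
    ∑ b ∈ s, c b • b = 0 → ∀ b ∈ s, c b = 0

namespace IsScalarBasis

variable {F V : Type*} [ScalarGroup F] [AddCommGroup V] [NearVectorSpace F V] {B : Set V}

theorem ne_zero (hB : IsScalarBasis F B) {b : V} (hb : b ∈ B) : b ≠ 0 :=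
  fun h => hB.zero_notMem (h ▸ hb)

theorem exists_smul_eq_neg (hB : IsScalarBasis F B) {b : V} (hb : b ∈ B) :
    ∃ ε : F, ε • b = -b := by
  classical
  obtain ⟨s, c, hs, hsum⟩ := hB.exists_eq_sum (-b)
  set e : F := if b ∈ s then c b else 0
  have hsplit : ∑ x ∈ s, c x • x = e • b + ∑ x ∈ s.erase b, c x • x := by
    by_cases hbs : b ∈ s
    · rw [show e = c b from if_pos hbs, Finset.add_sum_erase s (fun x => c x • x) hbs]
    · simp only [e, if_neg hbs, Finset.erase_eq_of_notMem hbs, NearVectorSpace.zero_smul,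
        zero_add]
  obtain ⟨γ, hγ⟩ := hB.subset_quasiKernel hb 1 e
  have hts : ↑(insert b (s.erase b)) ⊆ B := by
    rw [Finset.coe_insert]
    exact Set.insert_subset hb ((Finset.coe_subset.2 (s.erase_subset b)).trans hs)
  have hzero : ∑ x ∈ insert b (s.erase b), Function.update c b γ x • x = 0 := by
    rw [Finset.sum_insert (s.notMem_erase b), Function.update_self,
      Finset.sum_congr rfl fun x hx => by rw [Function.update_of_ne (Finset.ne_of_mem_erase hx)],
      ← hγ, one_smul, add_assoc, ← hsplit, ← hsum, add_neg_cancel]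
  have hγ0 := hB.eq_zero_of_sum_eq_zero _ _ hts hzero b (Finset.mem_insert_self b _)
  rw [Function.update_self] at hγ0
  rw [hγ0, NearVectorSpace.zero_smul, one_smul] at hγ
  exact ⟨e, eq_neg_of_add_eq_zero_right hγ⟩

theorem negOne_smul (hB : IsScalarBasis F B) (v : V) : (negOne : F) • v = -v := by
  obtain ⟨s, c, hs, rfl⟩ := hB.exists_eq_sum v
  rw [Finset.smul_sum, ← Finset.sum_neg_distrib]
  refine Finset.sum_congr rfl fun x hx => ?_
  by_cases h1 : (negOne : F) = 1
  · obtain ⟨ε, hε⟩ := hB.exists_smul_eq_neg (hs hx)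
    have hε1 : ε = 1 :=
      (eq_one_or_eq_negOne_of_smul_eq_neg (hB.ne_zero (hs hx)) hε).elim id (·.trans h1)
    rw [h1, one_smul, ← smul_neg, ← hε, hε1, one_smul]
  · exact negOne_smul_of_mem_quasiKernel h1
      (smul_mem_quasiKernel (hB.subset_quasiKernel (hs hx)) _)

theorem eq_of_sum_smul_eq (hB : IsScalarBasis F B) {s : Finset V} (hs : ↑s ⊆ B)
    {c c' : V → F} (h : ∑ x ∈ s, c x • x = ∑ x ∈ s, c' x • x) : ∀ x ∈ s, c x = c' x := by
  choose! d hd using fun x (hx : x ∈ s) => hB.subset_quasiKernel (hs hx) (c x) (c' x * negOne)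
  have hd' : ∀ x ∈ s, d x • x = c x • x - c' x • x := fun x hx => by
    rw [← hd x hx, mul_smul, hB.negOne_smul, smul_neg, sub_eq_add_neg]
  have hd0 : ∑ x ∈ s, d x • x = 0 := by
    rw [Finset.sum_congr rfl hd', Finset.sum_sub_distrib, h, sub_self]
  intro x hx
  refine NearVectorSpace.free _ _ x (hB.ne_zero (hs hx)) (sub_eq_zero.1 ?_)
  rw [← hd' x hx, hB.eq_zero_of_sum_eq_zero s d hs hd0 x hx, NearVectorSpace.zero_smul]

end IsScalarBasis

section Distributive

variable {F : Type*} [ScalarGroup F] {p : F → F → F}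

theorem one_mem_dstrU : (1 : F) ∈ dstrU p := fun α β => by
  rw [mul_one, mul_one, mul_one]

theorem mul_mem_dstrU {a b : F} (ha : a ∈ dstrU p) (hb : b ∈ dstrU p) : a * b ∈ dstrU p :=
  fun α β => by rw [← mul_assoc, ha, hb, mul_assoc, mul_assoc]

theorem inv_mem_dstrU {a : F} (ha : a ∈ dstrU p) (ha0 : a ≠ 0) : a⁻¹ ∈ dstrU p := fun α β => by
  rw [← ScalarGroup.mul_mul_inv_cancel_right ha0 (p (α * a⁻¹) (β * a⁻¹)), ha,
    ScalarGroup.mul_inv_mul_cancel_right ha0, ScalarGroup.mul_inv_mul_cancel_right ha0]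

instance : One (dstrU p) := ⟨⟨1, one_mem_dstrU⟩⟩

instance : Mul (dstrU p) := ⟨fun a b => ⟨a * b, mul_mem_dstrU a.2 b.2⟩⟩

end Distributive

structure IsNearFieldAdd {F : Type*} [ScalarGroup F] (p : F → F → F) : Prop where
  add_assoc : ∀ a b c : F, p (p a b) c = p a (p b c)
  add_comm : ∀ a b : F, p a b = p b a
  zero_add : ∀ a : F, p 0 a = a
  add_mul_negOne : ∀ a : F, p a (a * negOne) = 0
  mul_add : ∀ c a b : F, c * p a b = p (c * a) (c * b)

theorem isNearFieldAdd_of_smul_add_smul {F V : Type*} [ScalarGroup F] [AddCommGroup V]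
    [NearVectorSpace F V] {u : V} (hu0 : u ≠ 0) (hneg : (negOne : F) • u = -u)
    {p : F → F → F} (hp : ∀ α β : F, α • u + β • u = p α β • u) : IsNearFieldAdd p := by
  have inj : ∀ {a b : F}, a • u = b • u → a = b := NearVectorSpace.free _ _ u hu0
  refine ⟨fun a b c => inj ?_, fun a b => inj ?_, fun a => inj ?_, fun a => inj ?_,
    fun c a b => inj ?_⟩
  · simp only [← hp, add_assoc]
  · simp only [← hp, add_comm]
  · rw [← hp, NearVectorSpace.zero_smul, zero_add]
  · rw [← hp, mul_smul, hneg, smul_neg, add_neg_cancel, NearVectorSpace.zero_smul]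
  · simp only [← hp, mul_smul, smul_add]

namespace IsNearFieldAdd

variable {F : Type*} [ScalarGroup F] {p : F → F → F} (h : IsNearFieldAdd p)
include h

theorem add_zero (a : F) : p a 0 = a := by
  rw [h.add_comm, h.zero_add]

theorem add_left_cancel {a b c : F} (hab : p c a = p c b) : a = b := by
  have hc : p (c * negOne) c = 0 := by rw [h.add_comm, h.add_mul_negOne]
  rw [← h.zero_add a, ← h.zero_add b, ← hc, h.add_assoc, h.add_assoc, hab]

theorem add_add_add_comm (a b c d : F) : p (p a b) (p c d) = p (p a c) (p b d) := by
  rw [h.add_assoc, ← h.add_assoc b, h.add_comm b c, h.add_assoc c, ← h.add_assoc]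

theorem zero_mem_dstrU : (0 : F) ∈ dstrU p := fun α β => by
  rw [ScalarGroup.mul_zero, ScalarGroup.mul_zero, ScalarGroup.mul_zero, h.zero_add]

-- both sides are additive inverses of `p α β`
theorem negOne_mem_dstrU : (negOne : F) ∈ dstrU p := fun α β => by
  refine h.add_left_cancel (c := p α β) ?_
  rw [h.add_mul_negOne, h.add_add_add_comm, h.add_mul_negOne, h.add_mul_negOne, h.zero_add]

theorem add_mem_dstrU {a b : F} (ha : a ∈ dstrU p) (hb : b ∈ dstrU p) : p a b ∈ dstrU p :=
  fun α β => by
  rw [h.mul_add, ha, hb, h.add_add_add_comm, ← h.mul_add, ← h.mul_add]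

end IsNearFieldAdd

section DivisionRing

variable {F : Type*} [ScalarGroup F] {p : F → F → F} [hp : Fact (IsNearFieldAdd p)]

instance : Zero (dstrU p) := ⟨⟨0, hp.out.zero_mem_dstrU⟩⟩

instance : Add (dstrU p) := ⟨fun a b => ⟨p a b, hp.out.add_mem_dstrU a.2 b.2⟩⟩

instance : Neg (dstrU p) :=
  ⟨fun a => ⟨a * negOne, mul_mem_dstrU a.2 hp.out.negOne_mem_dstrU⟩⟩

-- `0⁻¹` is unspecified in a scalar group
open Classical in
noncomputable instance : Inv (dstrU p) :=
  ⟨fun a => if ha : (a : F) = 0 then 0 else ⟨(a : F)⁻¹, inv_mem_dstrU a.2 ha⟩⟩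

noncomputable instance : DivisionRing (dstrU p) where
  nsmul := nsmulRec
  zsmul := zsmulRec
  nnqsmul := _
  qsmul := _
  add_assoc a b c := Subtype.ext (hp.out.add_assoc a b c)
  add_comm a b := Subtype.ext (hp.out.add_comm a b)
  zero_add a := Subtype.ext (hp.out.zero_add a)
  add_zero a := Subtype.ext (hp.out.add_zero a)
  neg_add_cancel a := Subtype.ext ((hp.out.add_comm _ _).trans (hp.out.add_mul_negOne a))
  mul_assoc a b c := Subtype.ext (mul_assoc (a : F) b c)
  one_mul a := Subtype.ext (one_mul (a : F))
  mul_one a := Subtype.ext (mul_one (a : F))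
  zero_mul a := Subtype.ext (ScalarGroup.zero_mul (a : F))
  mul_zero a := Subtype.ext (ScalarGroup.mul_zero (a : F))
  left_distrib a b c := Subtype.ext (hp.out.mul_add a b c)
  right_distrib a b c := Subtype.ext (c.2 a b)
  exists_pair_ne := ⟨0, 1, fun h => ScalarGroup.one_ne_zero (congrArg Subtype.val h).symm⟩
  mul_inv_cancel a ha := by
    have ha' : (a : F) ≠ 0 := fun h => ha (Subtype.ext h)
    exact Subtype.ext ((congrArg (a.1 * ·) (congrArg Subtype.val (dif_neg ha'))).trans
      (ScalarGroup.mul_inv_cancel _ ha'))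
  inv_zero := dif_pos rfl

end DivisionRing

section QU

variable {F V : Type*} [ScalarGroup F] [AddCommGroup V] [NearVectorSpace F V] {p : F → F → F}

theorem mem_QU_of_smul_add_smul {v : V} (hv : ∀ α β : F, α • v + β • v = p α β • v) :
    v ∈ QU F V p :=
  ⟨fun α β => ⟨p α β, hv α β⟩, hv⟩

theorem smul_mem_QU {γ : F} (hγ : γ ∈ dstrU p) {v : V} (hv : v ∈ QU F V p) :
    γ • v ∈ QU F V p :=
  mem_QU_of_smul_add_smul fun α β => by rw [← mul_smul, ← mul_smul, hv.2, ← hγ, mul_smul]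

variable (V p) in
def quAddSubgroup : AddSubgroup V where
  carrier := QU F V p
  zero_mem' := mem_QU_of_smul_add_smul fun _ _ => by simp
  add_mem' {v w} hv hw := mem_QU_of_smul_add_smul fun α β => by
    rw [smul_add, smul_add, smul_add, add_add_add_comm, hv.2, hw.2]
  neg_mem' {v} hv := mem_QU_of_smul_add_smul fun α β => by
    rw [smul_neg, smul_neg, smul_neg, ← neg_add, hv.2]

variable [Fact (IsNearFieldAdd p)]

noncomputable instance : Module (dstrU p) (quAddSubgroup V p) where
  smul γ v := ⟨(γ : F) • (v : V), smul_mem_QU γ.2 v.2⟩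
  one_smul v := Subtype.ext (one_smul F (v : V))
  mul_smul a b v := Subtype.ext (mul_smul (a : F) b (v : V))
  smul_zero a := Subtype.ext (smul_zero (a : F))
  smul_add a v w := Subtype.ext (smul_add (a : F) (v : V) w)
  add_smul a b v := Subtype.ext (v.2.2 a b).symm
  zero_smul v := Subtype.ext (NearVectorSpace.zero_smul (v : V))

@[simp]
theorem quAddSubgroup.coe_smul (γ : dstrU p) (v : quAddSubgroup V p) :
    ((γ • v : quAddSubgroup V p) : V) = (γ : F) • (v : V) := rfl

end QU

section Compatible

variable {F V : Type*} [ScalarGroup F] [AddCommGroup V] [NearVectorSpace F V]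
  (hneg : ∀ v : V, (negOne : F) • v = -v) {u v : V}
include hneg

theorem eq_of_smul_add_smul_eq (hu : u ∈ quasiKernel F V) (hu0 : u ≠ 0)
    (hv : v ∈ quasiKernel F V) (huv : ∀ d : F, u ≠ d • v) {a a' c c' : F}
    (h : a • u + c • v = a' • u + c' • v) : a = a' := by
  obtain ⟨k, hk⟩ := hu a (a' * negOne)
  obtain ⟨m, hm⟩ := hv c' (c * negOne)
  rw [mul_smul, hneg, smul_neg, ← sub_eq_add_neg] at hk hm
  have hkm : k • u = m • v := by
    rw [← hk, ← hm, sub_eq_sub_iff_add_eq_add, h, add_comm]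
  by_cases hk0 : k = 0
  · rw [hk0, NearVectorSpace.zero_smul, sub_eq_zero] at hk
    exact NearVectorSpace.free _ _ u hu0 hk
  · refine absurd ?_ (huv (k⁻¹ * m))
    rw [mul_smul, ← hkm, ← mul_smul, ScalarGroup.inv_mul_cancel k hk0, one_smul]

theorem mem_QU_of_add_mem_quasiKernel (hu : u ∈ quasiKernel F V) (hu0 : u ≠ 0)
    (hv : v ∈ quasiKernel F V) (huv : ∀ d : F, u ≠ d • v) (hadd : u + v ∈ quasiKernel F V)
    {p : F → F → F} (hp : ∀ α β : F, α • u + β • u = p α β • u) : v ∈ QU F V p := by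
  refine mem_QU_of_smul_add_smul fun α β => ?_
  obtain ⟨γ, hγ⟩ := hadd α β
  obtain ⟨δ, hδ⟩ := hv α β
  have h : p α β • u + δ • v = γ • u + γ • v := by
    rw [← hp, ← hδ, ← smul_add, ← hγ, smul_add, smul_add, add_add_add_comm]
  have hpγ := eq_of_smul_add_smul_eq hneg hu hu0 hv huv h
  rw [hpγ] at h
  rw [hδ, add_left_cancel h, hpγ]

theorem exists_smul_mem_QU (hu : u ∈ quasiKernel F V) (hu0 : u ≠ 0) {p : F → F → F}
    (hp : ∀ α β : F, α • u + β • u = p α β • u) {q : V} (hq : q ∈ quasiKernel F V)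
    (hcompat : ∃ lam : F, lam ≠ 0 ∧ u + lam • q ∈ quasiKernel F V) :
    ∃ μ : F, μ ≠ 0 ∧ μ • q ∈ QU F V p := by
  by_cases hmul : ∃ d : F, u = d • q
  · obtain ⟨d, rfl⟩ := hmul
    exact ⟨d, fun hd => hu0 (by rw [hd, NearVectorSpace.zero_smul]), hu, hp⟩
  · obtain ⟨lam, hlam, hadd⟩ := hcompat
    refine ⟨lam, hlam, mem_QU_of_add_mem_quasiKernel hneg hu hu0
      (smul_mem_quasiKernel hq lam) (fun d h => hmul ⟨d * lam, ?_⟩) hadd hp⟩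
    rw [h, mul_smul]

end Compatible

section Basis

variable {F V : Type*} [ScalarGroup F] [AddCommGroup V] [NearVectorSpace F V]

theorem eq_zero_of_sum_subtype_smul_eq_zero {S : Set V} {D : Set F} (hD : (0 : F) ∈ D)
    (hS : ∀ (s : Finset V) (c : V → F), ↑s ⊆ S → (∀ b, c b ∈ D) →
      ∑ b ∈ s, c b • b = 0 → ∀ b ∈ s, c b = 0)
    {s : Finset S} {c : S → F} (hc : ∀ i, c i ∈ D) (h : ∑ i ∈ s, c i • (i : V) = 0) :
    ∀ i ∈ s, c i = 0 := by
  classical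
  let c' : V → F := fun x => if hx : x ∈ S then c ⟨x, hx⟩ else 0
  have hc' : ∀ i : S, c' i = c i := fun i => dif_pos i.2
  intro i hi
  rw [← hc']
  refine hS (s.map (Function.Embedding.subtype _)) c' (by simp) (fun x => ?_) ?_ i
    (Finset.mem_map_of_mem _ hi)
  · by_cases hx : x ∈ S
    · simp only [c', dif_pos hx, hc]
    · simp only [c', dif_neg hx, hD]
  · simpa [Finset.sum_map, hc'] using h

variable {p : F → F → F} [Fact (IsNearFieldAdd p)]

theorem mem_span_of_coe_eq_sum {ι : Type*} (w : ι → quAddSubgroup V p) (m : quAddSubgroup V p)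
    (s : Finset V) (f : V → V) (hm : (m : V) = ∑ x ∈ s, f x)
    (hf : ∀ x ∈ s, ∃ (d : dstrU p) (i : ι), f x = (d : F) • (w i : V)) :
    m ∈ Submodule.span (dstrU p) (Set.range w) := by
  set N := Submodule.span (dstrU p) (Set.range w)
  have hmN : (m : V) ∈ N.toAddSubgroup.map (quAddSubgroup V p).subtype := by
    rw [hm]
    refine AddSubgroup.sum_mem _ fun x hx => ?_
    obtain ⟨d, i, hfx⟩ := hf x hx
    exact ⟨d • w i, N.smul_mem d (Submodule.subset_span ⟨i, rfl⟩), hfx.symm⟩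
  obtain ⟨m', hm'N, hm'⟩ := hmN
  rwa [← Subtype.ext hm']

theorem IsScalarBasis.linearIndependent_smul {B : Set V} (hB : IsScalarBasis F B) {μ : V → F}
    (hμ0 : ∀ b ∈ B, μ b ≠ 0) (hμ : ∀ b ∈ B, μ b • b ∈ QU F V p) :
    LinearIndependent (dstrU p) (fun b : B => (⟨μ b • b, hμ b b.2⟩ : quAddSubgroup V p)) := by
  rw [linearIndependent_iff']
  intro s g hsum i hi
  have hsum' : ∑ j ∈ s, ((g j : F) * μ j) • (j : V) = 0 := by
    simpa [mul_smul] using congrArg Subtype.val hsum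
  have := eq_zero_of_sum_subtype_smul_eq_zero (Set.mem_univ 0)
    (fun s c hs _ => hB.eq_zero_of_sum_eq_zero s c hs) (fun _ => Set.mem_univ _) hsum' i hi
  exact Subtype.ext (ScalarGroup.eq_zero_of_mul_eq_zero (hμ0 i i.2) this)

theorem IsScalarBasis.span_smul {B : Set V} (hB : IsScalarBasis F B) {μ : V → F}
    (hμ0 : ∀ b ∈ B, μ b ≠ 0) (hμ : ∀ b ∈ B, μ b • b ∈ QU F V p) :
    ⊤ ≤ Submodule.span (dstrU p)
      (Set.range fun b : B => (⟨μ b • b, hμ b b.2⟩ : quAddSubgroup V p)) := by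
  rintro m -
  obtain ⟨s, c, hs, hm⟩ := hB.exists_eq_sum (m : V)
  have hc : ∀ x ∈ s, c x • x = (c x * (μ x)⁻¹) • (μ x • x) := fun x hx => by
    rw [← mul_smul, ScalarGroup.mul_inv_mul_cancel_right (hμ0 x (hs hx))]
  -- compare the `B`-coordinates of `α • m + β • m = p α β • m`
  have hcoord : ∀ α β : F, ∀ x ∈ s,
      p α β * c x = p (α * (c x * (μ x)⁻¹)) (β * (c x * (μ x)⁻¹)) * μ x := by
    intro α β
    refine hB.eq_of_sum_smul_eq hs ?_
    simp_rw [mul_smul, ← Finset.smul_sum, ← hm, ← m.2.2 α β]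
    rw [hm, Finset.smul_sum, Finset.smul_sum, ← Finset.sum_add_distrib]
    refine Finset.sum_congr rfl fun x hx => ?_
    rw [hc x hx, ← mul_smul α, ← mul_smul β, (hμ x (hs hx)).2]
  refine mem_span_of_coe_eq_sum _ m s _ hm fun x hx => ⟨⟨c x * (μ x)⁻¹, fun α β => ?_⟩,
    ⟨x, hs hx⟩, hc x hx⟩
  rw [← mul_assoc, hcoord α β x hx, ScalarGroup.mul_mul_inv_cancel_right (hμ0 x (hs hx))]

theorem linearIndependent_of_subset_QU {C : Set V} (hC : C ⊆ QU F V p)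
    (hCindep : ∀ (s : Finset V) (c : V → F), ↑s ⊆ C → (∀ b, c b ∈ dstrU p) →
      ∑ b ∈ s, c b • b = 0 → ∀ b ∈ s, c b = 0) :
    LinearIndependent (dstrU p) (fun b : C => (⟨b, hC b.2⟩ : quAddSubgroup V p)) := by
  rw [linearIndependent_iff']
  intro s g hsum i hi
  exact Subtype.ext (eq_zero_of_sum_subtype_smul_eq_zero (Fact.out : IsNearFieldAdd p).zero_mem_dstrU hCindep
    (fun j => (g j).2) (by simpa using congrArg Subtype.val hsum) i hi)

theorem span_of_subset_QU {C : Set V} (hC : C ⊆ QU F V p)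
    (hCspan : ∀ v ∈ QU F V p, ∃ (s : Finset V) (c : V → F),
      ↑s ⊆ C ∧ (∀ b, c b ∈ dstrU p) ∧ v = ∑ b ∈ s, c b • b) :
    ⊤ ≤ Submodule.span (dstrU p) (Set.range fun b : C => (⟨b, hC b.2⟩ : quAddSubgroup V p)) := by
  rintro m -
  obtain ⟨s, c, hs, hc, hm⟩ := hCspan m m.2
  exact mem_span_of_coe_eq_sum _ m s _ hm fun x hx => ⟨⟨c x, hc x⟩, ⟨x, hs hx⟩, rfl⟩

end Basis

theorem stmt18_general (F V : Type*) [ScalarGroup F] [AddCommGroup V] [NearVectorSpace F V]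
    (hreg : ∀ v ∈ quasiKernel F V, v ≠ 0 → ∀ w ∈ quasiKernel F V, w ≠ 0 →
      ∃ lam : F, lam ≠ 0 ∧ v + lam • w ∈ quasiKernel F V)
    (u : V) (hu : u ∈ quasiKernel F V) (hu0 : u ≠ 0)
    (p : F → F → F) (hp : ∀ α β : F, α • u + β • u = p α β • u)
    -- `B` is a scalar basis of `V` over `F`
    (B : Set V) (hBQ : B ⊆ quasiKernel F V) (hB0 : (0 : V) ∉ B)
    (hBspan : ∀ v : V, ∃ (s : Finset V) (c : V → F), ↑s ⊆ B ∧ v = ∑ b ∈ s, c b • b)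
    (hBindep : ∀ (s : Finset V) (c : V → F), ↑s ⊆ B →
      ∑ b ∈ s, c b • b = 0 → ∀ b ∈ s, c b = 0)
    -- `C` is a basis of the `𝔡_u`-vector space `Q_u(V)`
    (C : Set V) (hC : C ⊆ QU F V p)
    (hCspan : ∀ v ∈ QU F V p, ∃ (s : Finset V) (c : V → F),
      ↑s ⊆ C ∧ (∀ b, c b ∈ dstrU p) ∧ v = ∑ b ∈ s, c b • b)
    (hCindep : ∀ (s : Finset V) (c : V → F), ↑s ⊆ C → (∀ b, c b ∈ dstrU p) →
      ∑ b ∈ s, c b • b = 0 → ∀ b ∈ s, c b = 0) :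
    Cardinal.mk B = Cardinal.mk C := by
  have hB : IsScalarBasis F B := ⟨hBQ, hB0, hBspan, hBindep⟩
  have : Fact (IsNearFieldAdd p) := ⟨isNearFieldAdd_of_smul_add_smul hu0 (hB.negOne_smul u) hp⟩
  choose! μ hμ0 hμ using fun b (hb : b ∈ B) => exists_smul_mem_QU hB.negOne_smul hu hu0 hp
    (hB.subset_quasiKernel hb) (hreg u hu hu0 b (hB.subset_quasiKernel hb) (hB.ne_zero hb))
  exact mk_eq_mk_of_basis' (.mk (hB.linearIndependent_smul hμ0 hμ) (hB.span_smul hμ0 hμ))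
    (.mk (linearIndependent_of_subset_QU hC hCindep) (span_of_subset_QU hC hCspan))

/-- For a regular near-vector space `V` and a nonzero quasi-kernel element `u`,
the dimension of `V` over `F` (the cardinality of any scalar basis) equals the
dimension of `Q_u(V)` as a vector space over the division ring `𝔡_u`:
any scalar basis `B` of `V` and any `𝔡_u`-basis `C` of `Q_u(V)` have the same
cardinality. -/
theorem stmt18 (F V : Type*) [ScalarGroup F] [AddCommGroup V] [NearVectorSpace F V]
    (hreg : ∀ v ∈ quasiKernel F V, v ≠ 0 → ∀ w ∈ quasiKernel F V, w ≠ 0 →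
      ∃ lam : F, lam ≠ 0 ∧ v + lam • w ∈ quasiKernel F V)
    (u : V) (hu : u ∈ quasiKernel F V) (hu0 : u ≠ 0)
    (p : F → F → F) (hp : ∀ α β : F, α • u + β • u = p α β • u)
    -- `B` is a scalar basis of `V` over `F`
    (B : Set V) (hBQ : B ⊆ quasiKernel F V) (hB0 : (0 : V) ∉ B)
    (hBspan : ∀ v : V, ∃ (s : Finset V) (c : V → F), ↑s ⊆ B ∧ v = ∑ b ∈ s, c b • b)
    (hBindep : ∀ (s : Finset V) (c : V → F), ↑s ⊆ B →
      ∑ b ∈ s, c b • b = 0 → ∀ b ∈ s, c b = 0)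
    -- `C` is a basis of the `𝔡_u`-vector space `Q_u(V)`
    (C : Set V) (hC : C ⊆ QU F V p) (hC0 : (0 : V) ∉ C)
    (hCspan : ∀ v ∈ QU F V p, ∃ (s : Finset V) (c : V → F),
      ↑s ⊆ C ∧ (∀ b, c b ∈ dstrU p) ∧ v = ∑ b ∈ s, c b • b)
    (hCindep : ∀ (s : Finset V) (c : V → F), ↑s ⊆ C → (∀ b, c b ∈ dstrU p) →
      ∑ b ∈ s, c b • b = 0 → ∀ b ∈ s, c b = 0) :
    Cardinal.mk B = Cardinal.mk C :=
  stmt18_general F V hreg u hu hu0 p hp B hBQ hB0 hBspan hBindep C hC hCspan hCindep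
end
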